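/- Let φ be a CNF formula, and let x be a variable of φ occurring negatively in exactly the clauses N₁, …, N_n and positively in exactly the clauses P₁, …, P_m, with n, m ≥ 1 and no clause of φ containing both x and ¬x. Let φ′ be the CNF formula obtained from φ by: introducing fresh variables x₁, …, x_{n+m} and y₁, …, y_{n+m−1}; adding, for each 1 ≤ i ≤ n + m − 1, the clauses (x_i ∨ y_i) and (¬y_i ∨ ¬x_{i+1}); replacing the occurrence of ¬x in N_k by ¬x_k for each 1 ≤ k ≤ n; and replacing the occurrence of x in P_j by x_{n+j} for each 1 ≤ j ≤ m. Then φ′ is satisfiable if and only if φ is satisfiable. -/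

import Mathlib

/-- A literal: a variable (indexed by ℕ) or its negation (`pos = false`). -/
structure VLit where
  var : ℕ
  pos : Bool
deriving DecidableEq

/-- A clause is a finite disjunction of literals. -/
abbrev VClause := List VLit

/-- A CNF formula is a finite conjunction of clauses. -/
abbrev VCNF := List VClause

/-- The value of a literal under an assignment. -/
def VLit.eval (w : ℕ → Bool) (l : VLit) : Bool :=
  if l.pos then w l.var else !(w l.var)

/-- An assignment satisfies a clause if some literal of it is true. -/
def VClause.sat (w : ℕ → Bool) (c : VClause) : Prop :=
  ∃ l ∈ c, l.eval w = true

/-- An assignment satisfies a CNF formula if it satisfies every clause. -/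
def VCNF.sat (w : ℕ → Bool) (φ : VCNF) : Prop :=
  ∀ c ∈ φ, c.sat w

/-- A CNF formula is satisfiable if some assignment satisfies it. -/
def VCNF.Satisfiable (φ : VCNF) : Prop :=
  ∃ w : ℕ → Bool, φ.sat w

/-- The set of variables occurring in a CNF formula. -/
def VCNF.vars (φ : VCNF) : Set ℕ :=
  {v | ∃ c ∈ φ, ∃ l ∈ c, l.var = v}


/-! The clauses `(xᵢ ∨ yᵢ)` and `(¬yᵢ ∨ ¬xᵢ₊₁)` say `xᵢ₊₁ → xᵢ`, so in any model of `φ'` the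
copies `x₁, …, x_{n+m}` are false from some index on. If `x₁, …, x_n` are all true, the clauses
`N_k` are satisfied without `¬x_k` and we set `x := true`; otherwise `x_{n+1}, …, x_{n+m}` are all
false, the clauses `P_j` are satisfied without `x_{n+j}`, and we set `x := false`. Conversely a
model of `φ` extends to `φ'` by giving every `xᵢ` the value of `x` and every `yᵢ` the opposite. -/

theorem VLit.eval_congr {w w' : ℕ → Bool} {l : VLit} (h : w l.var = w' l.var) :
    l.eval w = l.eval w' := by
  simp [VLit.eval, h]

theorem VLit.var_ne_of_ne {l : VLit} {x : ℕ} {p : Bool} (h : l ≠ ⟨x, p⟩) (h' : l ≠ ⟨x, !p⟩) :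
    l.var ≠ x := by
  obtain ⟨v, _ | _⟩ := l <;> rintro rfl <;> cases p <;> simp_all

theorem VClause.sat_congr {w w' : ℕ → Bool} {c : VClause} (h : ∀ l ∈ c, w l.var = w' l.var) :
    c.sat w ↔ c.sat w' := by
  simp only [VClause.sat]
  exact exists_congr fun l => and_congr_right fun hl => by rw [VLit.eval_congr (h l hl)]

section ReplaceLit

variable {w w' : ℕ → Bool} {c : VClause} {a b : VLit}

theorem VClause.sat_of_sat_map_replace (ha : a ∈ c) (hrest : ∀ l ∈ c, l ≠ a → w' l.var = w l.var)
    (hab : b.eval w' = true → a.eval w = true)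
    (h : VClause.sat w' (c.map fun l => if l = a then b else l)) : c.sat w := by
  obtain ⟨_, hl', hev⟩ := h
  obtain ⟨l, hl, rfl⟩ := List.mem_map.1 hl'
  by_cases hla : l = a
  · rw [if_pos hla] at hev
    exact ⟨a, ha, hab hev⟩
  · rw [if_neg hla, VLit.eval_congr (hrest l hl hla)] at hev
    exact ⟨l, hl, hev⟩

theorem VClause.sat_map_replace_of_sat (hrest : ∀ l ∈ c, l ≠ a → w' l.var = w l.var)
    (hab : a.eval w = true → b.eval w' = true) (h : c.sat w) :
    VClause.sat w' (c.map fun l => if l = a then b else l) := by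
  obtain ⟨l, hl, hev⟩ := h
  by_cases hla : l = a
  · exact ⟨b, List.mem_map.2 ⟨l, hl, if_pos hla⟩, hab (hla ▸ hev)⟩
  · refine ⟨l, List.mem_map.2 ⟨l, hl, if_neg hla⟩, ?_⟩
    rwa [VLit.eval_congr (hrest l hl hla)]

end ReplaceLit

namespace VCNF

theorem sat_append {w : ℕ → Bool} {φ ψ : VCNF} : (φ ++ ψ).sat w ↔ φ.sat w ∧ ψ.sat w := by
  simp only [VCNF.sat, List.mem_append, or_imp, forall_and]

theorem sat_congr {w w' : ℕ → Bool} {φ : VCNF} (h : ∀ c ∈ φ, ∀ l ∈ c, w l.var = w' l.var) :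
    φ.sat w ↔ φ.sat w' :=
  forall₂_congr fun c hc => VClause.sat_congr (h c hc)

def replaceLitIndexed (a : VLit) (b : ℕ → VLit) (Cs : VCNF) : VCNF :=
  (Cs.zipIdx.map Prod.swap).map fun kc => kc.2.map fun l => if l = a then b kc.1 else l

section ReplaceLitIndexed

variable {w w' : ℕ → Bool} {a : VLit} {b : ℕ → VLit} {Cs : VCNF}

theorem mem_replaceLitIndexed {c' : VClause} :
    c' ∈ replaceLitIndexed a b Cs ↔
      ∃ k, ∃ hk : k < Cs.length, (Cs[k].map fun l => if l = a then b k else l) = c' := by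
  simp only [replaceLitIndexed, List.map_map, List.mem_map, Prod.exists, Function.comp_apply,
    Prod.fst_swap, Prod.snd_swap, List.mk_mem_zipIdx_iff_getElem?, List.getElem?_eq_some_iff]
  constructor
  · rintro ⟨c, k, ⟨hk, rfl⟩, rfl⟩
    exact ⟨k, hk, rfl⟩
  · rintro ⟨k, hk, rfl⟩
    exact ⟨_, k, ⟨hk, rfl⟩, rfl⟩

theorem sat_of_sat_replaceLitIndexed (ha : ∀ c ∈ Cs, a ∈ c)
    (hrest : ∀ c ∈ Cs, ∀ l ∈ c, l ≠ a → w' l.var = w l.var)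
    (hab : ∀ k < Cs.length, (b k).eval w' = true → a.eval w = true)
    (h : (replaceLitIndexed a b Cs).sat w') : Cs.sat w := by
  intro c hc
  obtain ⟨k, hk, rfl⟩ := List.getElem_of_mem hc
  exact VClause.sat_of_sat_map_replace (ha _ hc) (hrest _ hc) (hab k hk)
    (h _ (mem_replaceLitIndexed.2 ⟨k, hk, rfl⟩))

theorem sat_replaceLitIndexed_of_sat (hrest : ∀ c ∈ Cs, ∀ l ∈ c, l ≠ a → w' l.var = w l.var)
    (hab : ∀ k < Cs.length, a.eval w = true → (b k).eval w' = true) (h : Cs.sat w) :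
    (replaceLitIndexed a b Cs).sat w' := by
  intro c' hc'
  obtain ⟨k, hk, rfl⟩ := mem_replaceLitIndexed.1 hc'
  have hc := List.getElem_mem hk
  exact VClause.sat_map_replace_of_sat (hrest _ hc) (hab k hk) (h _ hc)

end ReplaceLitIndexed

def splitChain (xv yv : ℕ → ℕ) (N : ℕ) : VCNF :=
  (List.range (N - 1)).map (fun i => [(⟨xv (i + 1), true⟩ : VLit), ⟨yv (i + 1), true⟩])
    ++ (List.range (N - 1)).map (fun i => [(⟨yv (i + 1), false⟩ : VLit), ⟨xv (i + 2), false⟩])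

section SplitChain

variable {w : ℕ → Bool} {xv yv : ℕ → ℕ} {N : ℕ}

theorem sat_splitChain_iff :
    (splitChain xv yv N).sat w ↔ ∀ i < N - 1,
      (w (xv (i + 1)) = true ∨ w (yv (i + 1)) = true) ∧
        (w (yv (i + 1)) = false ∨ w (xv (i + 2)) = false) := by
  rw [splitChain, sat_append]
  simp [VCNF.sat, VClause.sat, VLit.eval, forall_and]

theorem sat_splitChain_of_forall {β : Bool} (hx : ∀ i, 1 ≤ i → i ≤ N → w (xv i) = β)
    (hy : ∀ i, 1 ≤ i → i ≤ N - 1 → w (yv i) = !β) : (splitChain xv yv N).sat w := by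
  refine sat_splitChain_iff.2 fun i hi => ?_
  rw [hx (i + 1) (by omega) (by omega), hx (i + 2) (by omega) (by omega),
    hy (i + 1) (by omega) (by omega)]
  cases β <;> simp

theorem eq_false_of_sat_splitChain (h : (splitChain xv yv N).sat w) {i j : ℕ} (hi : 1 ≤ i)
    (hij : i ≤ j) (hj : j ≤ N) (hxi : w (xv i) = false) : w (xv j) = false := by
  induction j, hij using Nat.le_induction with
  | base => exact hxi
  | succ j hij ih =>
    obtain ⟨hxy, hyx⟩ := sat_splitChain_iff.1 h (j - 1) (by omega)
    rw [show j - 1 + 1 = j by omega, ih (by omega)] at hxy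
    rw [show j - 1 + 1 = j by omega, show j - 1 + 2 = j + 1 by omega] at hyx
    simp_all

end SplitChain

end VCNF

def splitAssignment (w : ℕ → Bool) (x : ℕ) (xv yv : ℕ → ℕ) (N : ℕ) (v : ℕ) : Bool :=
  if v ∈ (Finset.Icc 1 N).image xv then w x
  else if v ∈ (Finset.Icc 1 (N - 1)).image yv then !w x else w v

section SplitAssignment

variable {w : ℕ → Bool} {x : ℕ} {xv yv : ℕ → ℕ} {N : ℕ}

theorem splitAssignment_xv {i : ℕ} (hi₁ : 1 ≤ i) (hi : i ≤ N) :
    splitAssignment w x xv yv N (xv i) = w x :=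
  if_pos (Finset.mem_image_of_mem xv (Finset.mem_Icc.2 ⟨hi₁, hi⟩))

theorem splitAssignment_yv (hxy : ∀ i j, 1 ≤ i → i ≤ N → 1 ≤ j → j ≤ N - 1 → xv i ≠ yv j)
    {j : ℕ} (hj₁ : 1 ≤ j) (hj : j ≤ N - 1) : splitAssignment w x xv yv N (yv j) = !w x := by
  rw [splitAssignment, if_neg, if_pos (Finset.mem_image_of_mem yv (Finset.mem_Icc.2 ⟨hj₁, hj⟩))]
  rintro hj'
  obtain ⟨i, hi, hij⟩ := Finset.mem_image.1 hj'
  exact hxy i j (Finset.mem_Icc.1 hi).1 (Finset.mem_Icc.1 hi).2 hj₁ hj hij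

theorem splitAssignment_of_forall_ne {v : ℕ} (hx : ∀ i, 1 ≤ i → i ≤ N → xv i ≠ v)
    (hy : ∀ i, 1 ≤ i → i ≤ N - 1 → yv i ≠ v) : splitAssignment w x xv yv N v = w v := by
  rw [splitAssignment, if_neg, if_neg] <;>
    simp only [Finset.mem_image, Finset.mem_Icc, not_exists, not_and, and_imp]
  · exact hy
  · exact hx

end SplitAssignment

namespace VCNF

def splitVar (x : ℕ) (xv yv : ℕ → ℕ) (n m : ℕ) (O Ns Ps : VCNF) : VCNF :=
  O ++ replaceLitIndexed ⟨x, false⟩ (fun k => ⟨xv (k + 1), false⟩) Ns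
    ++ replaceLitIndexed ⟨x, true⟩ (fun j => ⟨xv (n + j + 1), true⟩) Ps ++ splitChain xv yv (n + m)

section SplitVar

variable {x : ℕ} {xv yv : ℕ → ℕ} {n m : ℕ} {O Ns Ps : VCNF}

theorem satisfiable_of_satisfiable_splitVar (hn : Ns.length = n) (hm : Ps.length = m)
    (hO : ∀ c ∈ O, ∀ l ∈ c, l.var ≠ x)
    (hNs : ∀ c ∈ Ns, (⟨x, false⟩ : VLit) ∈ c ∧ (⟨x, true⟩ : VLit) ∉ c)
    (hPs : ∀ c ∈ Ps, (⟨x, true⟩ : VLit) ∈ c ∧ (⟨x, false⟩ : VLit) ∉ c)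
    (h : (splitVar x xv yv n m O Ns Ps).Satisfiable) : (O ++ Ns ++ Ps).Satisfiable := by
  obtain ⟨w, hw⟩ := h
  simp only [splitVar, sat_append] at hw
  obtain ⟨⟨⟨hOw, hNw⟩, hPw⟩, hchain⟩ := hw
  have hOx (β : Bool) : O.sat (Function.update w x β) :=
    (sat_congr fun c hc l hl => (Function.update_of_ne (hO c hc l hl) β w).symm).1 hOw
  have hagree (β : Bool) {Cs : VCNF} {p : Bool} (hCs : ∀ c ∈ Cs, (⟨x, !p⟩ : VLit) ∉ c) :
      ∀ c ∈ Cs, ∀ l ∈ c, l ≠ ⟨x, p⟩ → w l.var = Function.update w x β l.var := by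
    intro c hc l hl hlx
    have hlx' := VLit.var_ne_of_ne hlx (ne_of_mem_of_not_mem hl (hCs c hc))
    exact (Function.update_of_ne hlx' β w).symm
  by_cases hneg : ∀ k < n, w (xv (k + 1)) = true
  · refine ⟨Function.update w x true, sat_append.2 ⟨sat_append.2 ⟨hOx true, ?_⟩, ?_⟩⟩
    · refine sat_of_sat_replaceLitIndexed (fun c hc => (hNs c hc).1)
        (hagree true fun c hc => (hNs c hc).2) (fun k hk hb => ?_) hNw
      simp [VLit.eval, hneg k (hn ▸ hk)] at hb
    · exact fun c hc => ⟨_, (hPs c hc).1, by simp [VLit.eval]⟩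
  · push Not at hneg
    obtain ⟨k, hk, hxk⟩ := hneg
    refine ⟨Function.update w x false, sat_append.2 ⟨sat_append.2 ⟨hOx false, ?_⟩, ?_⟩⟩
    · exact fun c hc => ⟨_, (hNs c hc).1, by simp [VLit.eval]⟩
    · refine sat_of_sat_replaceLitIndexed (fun c hc => (hPs c hc).1)
        (hagree false fun c hc => (hPs c hc).2) (fun j hj hb => ?_) hPw
      have hxj := eq_false_of_sat_splitChain hchain (i := k + 1) (j := n + j + 1) (by omega) (by omega)
        (by omega) (Bool.eq_false_iff.2 hxk)
      simp [VLit.eval, hxj] at hb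

theorem satisfiable_splitVar_of_satisfiable (hn : Ns.length = n) (hm : Ps.length = m)
    (hxfresh : ∀ i, 1 ≤ i → i ≤ n + m → xv i ∉ VCNF.vars (O ++ Ns ++ Ps))
    (hyfresh : ∀ i, 1 ≤ i → i ≤ n + m - 1 → yv i ∉ VCNF.vars (O ++ Ns ++ Ps))
    (hxy : ∀ i j, 1 ≤ i → i ≤ n + m → 1 ≤ j → j ≤ n + m - 1 → xv i ≠ yv j)
    (h : (O ++ Ns ++ Ps).Satisfiable) : (splitVar x xv yv n m O Ns Ps).Satisfiable := by
  obtain ⟨w, hw⟩ := h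
  set w' := splitAssignment w x xv yv (n + m)
  have hagree : ∀ c ∈ O ++ Ns ++ Ps, ∀ l ∈ c, w' l.var = w l.var := fun c hc l hl =>
    splitAssignment_of_forall_ne (fun i hi₁ hi hil => hxfresh i hi₁ hi ⟨c, hc, l, hl, hil.symm⟩)
      (fun i hi₁ hi hil => hyfresh i hi₁ hi ⟨c, hc, l, hl, hil.symm⟩)
  have hxw (i : ℕ) (hi₁ : 1 ≤ i) (hi : i ≤ n + m) : w' (xv i) = w x := splitAssignment_xv hi₁ hi
  simp only [sat_append] at hw
  obtain ⟨⟨hOw, hNw⟩, hPw⟩ := hw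
  refine ⟨w', sat_append.2 ⟨sat_append.2 ⟨sat_append.2 ⟨?_, ?_⟩, ?_⟩,
    sat_splitChain_of_forall hxw fun j hj₁ hj => splitAssignment_yv hxy hj₁ hj⟩⟩
  · exact (sat_congr fun c hc l hl => hagree c (by simp [hc]) l hl).2 hOw
  · refine sat_replaceLitIndexed_of_sat (fun c hc l hl _ => hagree c (by simp [hc]) l hl)
      (fun k hk => ?_) hNw
    simp [VLit.eval, hxw (k + 1) (by omega) (by omega)]
  · refine sat_replaceLitIndexed_of_sat (fun c hc l hl _ => hagree c (by simp [hc]) l hl)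
      (fun j hj => ?_) hPw
    simp [VLit.eval, hxw (n + j + 1) (by omega) (by omega)]

end SplitVar

end VCNF

theorem variable_split_equisatisfiable_general (x : ℕ) (O Ns Ps : VCNF) (n m : ℕ)
    (hn : Ns.length = n) (hm : Ps.length = m)
    (hO : ∀ c ∈ O, ∀ l ∈ c, l.var ≠ x)
    (hNs : ∀ c ∈ Ns, (⟨x, false⟩ : VLit) ∈ c ∧ (⟨x, true⟩ : VLit) ∉ c)
    (hPs : ∀ c ∈ Ps, (⟨x, true⟩ : VLit) ∈ c ∧ (⟨x, false⟩ : VLit) ∉ c)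
    (xv yv : ℕ → ℕ)
    (hxfresh : ∀ i, 1 ≤ i → i ≤ n + m → xv i ∉ VCNF.vars (O ++ Ns ++ Ps))
    (hyfresh : ∀ i, 1 ≤ i → i ≤ n + m - 1 → yv i ∉ VCNF.vars (O ++ Ns ++ Ps))
    (hxy : ∀ i j, 1 ≤ i → i ≤ n + m → 1 ≤ j → j ≤ n + m - 1 → xv i ≠ yv j) :
    VCNF.Satisfiable
      (O
        ++ ((Ns.zipIdx.map Prod.swap).map (fun kc =>
              kc.2.map (fun l =>
                if l = (⟨x, false⟩ : VLit) then (⟨xv (kc.1 + 1), false⟩ : VLit) else l)))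
        ++ ((Ps.zipIdx.map Prod.swap).map (fun jc =>
              jc.2.map (fun l =>
                if l = (⟨x, true⟩ : VLit) then (⟨xv (n + jc.1 + 1), true⟩ : VLit) else l)))
        ++ ((List.range (n + m - 1)).map
              (fun i => [(⟨xv (i + 1), true⟩ : VLit), ⟨yv (i + 1), true⟩]))
        ++ ((List.range (n + m - 1)).map
              (fun i => [(⟨yv (i + 1), false⟩ : VLit), ⟨xv (i + 2), false⟩])))
      ↔ VCNF.Satisfiable (O ++ Ns ++ Ps) := by
  rw [List.append_assoc]
  exact ⟨VCNF.satisfiable_of_satisfiable_splitVar hn hm hO hNs hPs,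
    VCNF.satisfiable_splitVar_of_satisfiable hn hm hxfresh hyfresh hxy⟩

/-- Let `φ = O ++ Ns ++ Ps` be a CNF formula in which the variable `x`
occurs negatively in exactly the clauses `Ns = N₁, …, N_n` and positively in exactly the
clauses `Ps = P₁, …, P_m` (`n, m ≥ 1`, no clause containing both `x` and `¬x`). Let `φ'`
be obtained from `φ` by introducing fresh pairwise-distinct variables
`x₁, …, x_{n+m}` (via `xv`) and `y₁, …, y_{n+m−1}` (via `yv`); adding the clauses
`(x_i ∨ y_i)` and `(¬y_i ∨ ¬x_{i+1})` for `1 ≤ i ≤ n+m−1`; replacing the occurrence of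
`¬x` in `N_k` by `¬x_k` for `1 ≤ k ≤ n`; and replacing the occurrence of `x` in `P_j` by
`x_{n+j}` for `1 ≤ j ≤ m`. Then `φ'` is satisfiable iff `φ` is satisfiable. -/
theorem variable_split_equisatisfiable (x : ℕ) (O Ns Ps : VCNF) (n m : ℕ)
    (hn : Ns.length = n) (hm : Ps.length = m) (hn1 : 1 ≤ n) (hm1 : 1 ≤ m)
    (hO : ∀ c ∈ O, ∀ l ∈ c, l.var ≠ x)
    (hNs : ∀ c ∈ Ns, (⟨x, false⟩ : VLit) ∈ c ∧ (⟨x, true⟩ : VLit) ∉ c)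
    (hPs : ∀ c ∈ Ps, (⟨x, true⟩ : VLit) ∈ c ∧ (⟨x, false⟩ : VLit) ∉ c)
    (xv yv : ℕ → ℕ)
    (hxfresh : ∀ i, 1 ≤ i → i ≤ n + m → xv i ∉ VCNF.vars (O ++ Ns ++ Ps))
    (hyfresh : ∀ i, 1 ≤ i → i ≤ n + m - 1 → yv i ∉ VCNF.vars (O ++ Ns ++ Ps))
    (hxinj : ∀ i j, 1 ≤ i → i ≤ n + m → 1 ≤ j → j ≤ n + m → xv i = xv j → i = j)
    (hyinj : ∀ i j, 1 ≤ i → i ≤ n + m - 1 → 1 ≤ j → j ≤ n + m - 1 → yv i = yv j → i = j)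
    (hxy : ∀ i j, 1 ≤ i → i ≤ n + m → 1 ≤ j → j ≤ n + m - 1 → xv i ≠ yv j) :
    VCNF.Satisfiable
      (O
        ++ ((Ns.zipIdx.map Prod.swap).map (fun kc =>
              kc.2.map (fun l =>
                if l = (⟨x, false⟩ : VLit) then (⟨xv (kc.1 + 1), false⟩ : VLit) else l)))
        ++ ((Ps.zipIdx.map Prod.swap).map (fun jc =>
              jc.2.map (fun l =>
                if l = (⟨x, true⟩ : VLit) then (⟨xv (n + jc.1 + 1), true⟩ : VLit) else l)))
        ++ ((List.range (n + m - 1)).map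
              (fun i => [(⟨xv (i + 1), true⟩ : VLit), ⟨yv (i + 1), true⟩]))
        ++ ((List.range (n + m - 1)).map
              (fun i => [(⟨yv (i + 1), false⟩ : VLit), ⟨xv (i + 2), false⟩])))
      ↔ VCNF.Satisfiable (O ++ Ns ++ Ps) :=
  variable_split_equisatisfiable_general x O Ns Ps n m hn hm hO hNs hPs xv yv hxfresh hyfresh hxy
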